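/- Let T be a rooted tree with root r, leaf set ℒ(T) and L(T) leaves. Let D_T(r) = Σ_{v ∈ ℒ(T)} d(v,r) be the sum of distances from the root to all leaves, and let TW(T) = Σ_{{v,w} ⊆ ℒ(T)} d(v,w) be the terminal Wiener index (the sum of distances over all unordered pairs of leaves). Then ρ_C(T) ≥ D_T(r) − TW(T)/L(T). -/

import Mathlib

open Matrix

/-- A rooted tree on a finite vertex type `V`, encoded by its root and the
parent function: the root is its own parent, and iterating the parent function
from any vertex eventually reaches the root.  (These conditions force the graph
whose edges join each non-root vertex to its parent to be a tree.) -/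
structure TreeOn (V : Type) [Fintype V] [DecidableEq V] where
  root : V
  parent : V → V
  parent_root : parent root = root
  reaches : ∀ v, ∃ k, parent^[k] v = root

namespace TreeOn

variable {V : Type} [Fintype V] [DecidableEq V]

/-- `u` is a (weak) ancestor of `v`: some iterate of the parent function sends
`v` to `u`.  (Any ancestor is reached within `Fintype.card V` steps, so the
bound makes the predicate decidable without changing its meaning.) -/
def IsAncestor (T : TreeOn V) (u v : V) : Prop :=
  ∃ k, k ≤ Fintype.card V ∧ T.parent^[k] v = u

instance (T : TreeOn V) (u v : V) : Decidable (T.IsAncestor u v) := by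
  have h : T.IsAncestor u v ↔ ∃ k ∈ Finset.range (Fintype.card V + 1), T.parent^[k] v = u := by
    simp [IsAncestor, Nat.lt_succ_iff]
  rw [h]; infer_instance

/-- The level of a vertex: its distance to the root. -/
def level (T : TreeOn V) (v : V) : ℕ := Nat.find (T.reaches v)

/-- The ancestral level `ℓ(v ∨ w)`: the level of the lowest common ancestor
of `v` and `w`, i.e. the greatest level of a common ancestor. -/
def lcaLevel (T : TreeOn V) (v w : V) : ℕ :=
  (Finset.univ.filter fun u => T.IsAncestor u v ∧ T.IsAncestor u w).sup T.level

/-- A leaf is a vertex with no children. -/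
def IsLeaf (T : TreeOn V) (v : V) : Prop := ∀ u, T.parent u = v → u = v

instance (T : TreeOn V) : DecidablePred T.IsLeaf := fun v =>
  inferInstanceAs (Decidable (∀ u, T.parent u = v → u = v))

/-- The type of leaves of `T`. -/
abbrev Leaf (T : TreeOn V) := {v : V // T.IsLeaf v}

/-- The ancestral matrix `C(T)`, indexed by the leaves of `T`, whose
`(v, w)` entry is the ancestral level `ℓ(v ∨ w)`. -/
noncomputable def ancMatrix (T : TreeOn V) : Matrix T.Leaf T.Leaf ℝ :=
  Matrix.of fun v w => (T.lcaLevel v.1 w.1 : ℝ)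

/-- The ancestral spectral radius `ρ_C(T)`: the largest eigenvalue of `C(T)`. -/
noncomputable def rhoC (T : TreeOn V) : ℝ :=
  sSup {μ : ℝ | ∃ x : T.Leaf → ℝ, x ≠ 0 ∧ T.ancMatrix.mulVec x = μ • x}

/-- The underlying simple graph of the tree: each non-root vertex is joined
to its parent. -/
def graph (T : TreeOn V) : SimpleGraph V :=
  SimpleGraph.fromRel fun u v => T.parent u = v ∧ u ≠ v

/-- The number of children (outdegree) of a vertex. -/
def childCount (T : TreeOn V) (v : V) : ℕ :=
  (Finset.univ.filter fun u => T.parent u = v ∧ u ≠ v).card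

end TreeOn

/-!
Test the all-ones vector `𝟙` in the Rayleigh quotient of the symmetric matrix `C(T)`:
`ρ_C(T) · L(T) ≥ 𝟙ᵀ C(T) 𝟙 = ∑_{v,w} ℓ(v ∨ w)`. For any two vertices,
`ℓ(v) + ℓ(w) - 2 ℓ(v ∨ w) ≤ d(v, w)`, because `x ↦ ℓ(x) - 2 ℓ(x ∨ w)` changes by at most one
along each edge and takes the values `ℓ(v) - 2 ℓ(v ∨ w)` at `v` and `-ℓ(w)` at `w`.
Summing over all ordered pairs of leaves gives `2 ∑_{v,w} ℓ(v ∨ w) ≥ 2 L(T) D_T(r) - 2 TW(T)`.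
-/

theorem LinearMap.re_inner_apply_self_le_iSup_rayleigh_mul_sq_norm {𝕜 E : Type*} [RCLike 𝕜]
    [NormedAddCommGroup E] [InnerProductSpace 𝕜 E] [FiniteDimensional 𝕜 E] (T : E →ₗ[𝕜] E)
    (x : E) :
    RCLike.re (inner 𝕜 (T x) x) ≤
      (⨆ y : {y : E // y ≠ 0}, RCLike.re (inner 𝕜 (T y) (y : E)) / ‖(y : E)‖ ^ 2) * ‖x‖ ^ 2 := by
  rcases eq_or_ne x 0 with rfl | hx
  · simp
  have hbdd : BddAbove (Set.range fun y : {y : E // y ≠ 0} =>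
      RCLike.re (inner 𝕜 (T y) (y : E)) / ‖(y : E)‖ ^ 2) :=
    ⟨‖T.toContinuousLinearMap‖, by
      rintro _ ⟨y, rfl⟩
      exact (le_abs_self _).trans (T.toContinuousLinearMap.rayleighQuotient_le_norm y)⟩
  rw [← div_le_iff₀ (by positivity)]
  exact le_ciSup hbdd ⟨x, hx⟩

namespace Matrix

variable {n : Type*} [Fintype n] [DecidableEq n]

theorem bddAbove_eigenvalues (A : Matrix n n ℝ) :
    BddAbove {μ : ℝ | ∃ x : n → ℝ, x ≠ 0 ∧ A *ᵥ x = μ • x} := by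
  refine (Module.End.finite_hasEigenvalue (toLin' A)).bddAbove.mono ?_
  rintro μ ⟨x, hx0, hx⟩
  exact Module.End.hasEigenvalue_of_hasEigenvector
    ⟨Module.End.mem_eigenspace_iff.2 (by simpa using hx), hx0⟩

theorem IsHermitian.sum_apply_le_sSup_eigenvalues_mul_card {A : Matrix n n ℝ}
    (hA : A.IsHermitian) :
    ∑ i, ∑ j, A i j ≤ sSup {μ : ℝ | ∃ x : n → ℝ, x ≠ 0 ∧ A *ᵥ x = μ • x} * Fintype.card n := by
  rcases isEmpty_or_nonempty n with hn | hn
  · simp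
  set T := toEuclideanLin A
  set μ := ⨆ y : {y : EuclideanSpace ℝ n // y ≠ 0},
    RCLike.re (inner ℝ (T y) (y : EuclideanSpace ℝ n)) / ‖(y : EuclideanSpace ℝ n)‖ ^ 2
  have hμ : μ ∈ {μ : ℝ | ∃ x : n → ℝ, x ≠ 0 ∧ A *ᵥ x = μ • x} := by
    obtain ⟨x, hx⟩ := (isSymmetric_toEuclideanLin_iff.2 hA).hasEigenvalue_iSup_of_finiteDimensional
      |>.exists_hasEigenvector
    exact ⟨x.ofLp, by simpa using hx.2, by simpa [T, μ] using congrArg WithLp.ofLp hx.apply_eq_smul⟩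
  have hones : ‖(WithLp.toLp 2 fun _ => 1 : EuclideanSpace ℝ n)‖ ^ 2 = Fintype.card n := by
    simp [EuclideanSpace.norm_eq]
  calc ∑ i, ∑ j, A i j
        = RCLike.re (inner ℝ (T (WithLp.toLp 2 fun _ => 1)) (WithLp.toLp 2 fun _ => 1)) := by
        simp [T, PiLp.inner_apply, mulVec, dotProduct]
    _ ≤ μ * Fintype.card n := hones ▸ T.re_inner_apply_self_le_iSup_rayleigh_mul_sq_norm _
    _ ≤ _ := by gcongr; exact le_csSup A.bddAbove_eigenvalues hμ

end Matrix

namespace SimpleGraph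

variable {V : Type*} {G : SimpleGraph V}

theorem Walk.sub_le_length {f : V → ℤ} (hf : ∀ a b, G.Adj a b → f a - f b ≤ 1) {u v : V}
    (p : G.Walk u v) : f u - f v ≤ p.length := by
  induction p with
  | nil => simp
  | cons h _ ih =>
    rw [Walk.length_cons]
    have := hf _ _ h
    omega

theorem Reachable.sub_le_dist {f : V → ℤ} (hf : ∀ a b, G.Adj a b → f a - f b ≤ 1) {u v : V}
    (h : G.Reachable u v) : f u - f v ≤ G.dist u v := by
  obtain ⟨p, hp⟩ := h.exists_walk_length_eq_dist
  exact hp ▸ p.sub_le_length hf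

end SimpleGraph

namespace TreeOn

variable {V : Type} [Fintype V] [DecidableEq V] (T : TreeOn V)

theorem iterate_level (v : V) : T.parent^[T.level v] v = T.root :=
  Nat.find_spec (T.reaches v)

theorem level_le {v : V} {k : ℕ} (h : T.parent^[k] v = T.root) : T.level v ≤ k :=
  Nat.find_min' _ h

theorem eq_root_of_parent_eq {v : V} (h : T.parent v = v) : v = T.root := by
  obtain ⟨k, hk⟩ := T.reaches v
  rwa [Function.iterate_fixed h] at hk

theorem level_parent {v : V} (h : T.parent v ≠ v) : T.level (T.parent v) + 1 = T.level v := by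
  have hv : T.level v ≠ 0 := fun h0 => h <| by
    have hroot := T.iterate_level v
    rw [h0, Function.iterate_zero_apply] at hroot
    rw [hroot, T.parent_root]
  obtain ⟨m, hm⟩ := Nat.exists_eq_add_one_of_ne_zero hv
  have hle : T.level (T.parent v) ≤ m := T.level_le <| by
    rw [← Function.iterate_succ_apply, Nat.succ_eq_add_one, ← hm, T.iterate_level]
  have hge : T.level v ≤ T.level (T.parent v) + 1 := T.level_le <| by
    rw [Function.iterate_succ_apply, T.iterate_level]
  omega

theorem level_parent_le (v : V) : T.level (T.parent v) ≤ T.level v := by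
  by_cases h : T.parent v = v
  · rw [h]
  · have := T.level_parent h
    omega

theorem level_iterate {v : V} {k : ℕ} (hk : k ≤ T.level v) :
    T.level (T.parent^[k] v) = T.level v - k := by
  induction k with
  | zero => rfl
  | succ k ih =>
    have hne : T.parent (T.parent^[k] v) ≠ T.parent^[k] v := fun h => by
      have := T.level_le (v := v) (k := k) (T.eq_root_of_parent_eq h)
      omega
    have := T.level_parent hne
    rw [Function.iterate_succ_apply']
    omega

theorem level_lt_card (v : V) : T.level v < Fintype.card V := by
  have hinj : Function.Injective fun i : Fin (T.level v + 1) => T.parent^[i] v := by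
    intro i j hij
    have hi := T.level_iterate (v := v) (Nat.le_of_lt_succ i.2)
    have hj := T.level_iterate (v := v) (Nat.le_of_lt_succ j.2)
    simp only at hij
    rw [hij] at hi
    omega
  simpa using Fintype.card_le_of_injective _ hinj

theorem isAncestor_of_iterate {u v : V} {k : ℕ} (h : T.parent^[k] v = u) : T.IsAncestor u v := by
  rcases le_or_gt k (T.level v) with hk | hk
  · exact ⟨k, hk.trans ((T.level_lt_card v).le), h⟩
  · refine ⟨T.level v, (T.level_lt_card v).le, ?_⟩
    rw [← h, T.iterate_level, ← Nat.sub_add_cancel hk.le, Function.iterate_add_apply,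
      T.iterate_level, Function.iterate_fixed T.parent_root]

theorem isAncestor_refl (v : V) : T.IsAncestor v v :=
  T.isAncestor_of_iterate (k := 0) rfl

theorem isAncestor_parent (v : V) : T.IsAncestor (T.parent v) v :=
  T.isAncestor_of_iterate (k := 1) rfl

theorem IsAncestor.trans {T : TreeOn V} {u v w : V} (h₁ : T.IsAncestor u v)
    (h₂ : T.IsAncestor v w) : T.IsAncestor u w := by
  obtain ⟨k, -, hk⟩ := h₁
  obtain ⟨l, -, hl⟩ := h₂
  exact T.isAncestor_of_iterate (k := k + l) (by rw [Function.iterate_add_apply, hl, hk])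

theorem isAncestor_parent_of_ne {u v : V} (h : T.IsAncestor u v) (hne : u ≠ v) :
    T.IsAncestor u (T.parent v) := by
  obtain ⟨_ | k, -, hk⟩ := h
  · exact absurd hk.symm hne
  · exact T.isAncestor_of_iterate (k := k) (by rwa [← Function.iterate_succ_apply])

theorem level_le_of_isAncestor {u v : V} (h : T.IsAncestor u v) : T.level u ≤ T.level v := by
  obtain ⟨k, -, rfl⟩ := h
  induction k with
  | zero => rfl
  | succ k ih =>
    rw [Function.iterate_succ_apply']
    exact (T.level_parent_le _).trans ih

theorem lcaLevel_comm (v w : V) : T.lcaLevel v w = T.lcaLevel w v := by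
  simp only [lcaLevel, and_comm]

theorem le_lcaLevel {u v w : V} (hv : T.IsAncestor u v) (hw : T.IsAncestor u w) :
    T.level u ≤ T.lcaLevel v w :=
  Finset.le_sup (Finset.mem_filter.2 ⟨Finset.mem_univ _, hv, hw⟩)

theorem lcaLevel_self (v : V) : T.lcaLevel v v = T.level v :=
  le_antisymm (Finset.sup_le fun _ hu => T.level_le_of_isAncestor (Finset.mem_filter.1 hu).2.1)
    (T.le_lcaLevel (T.isAncestor_refl v) (T.isAncestor_refl v))

theorem lcaLevel_parent_le (v w : V) : T.lcaLevel (T.parent v) w ≤ T.lcaLevel v w := by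
  refine Finset.sup_mono fun u hu => ?_
  simp only [Finset.mem_filter, Finset.mem_univ, true_and] at hu ⊢
  exact ⟨hu.1.trans (T.isAncestor_parent v), hu.2⟩

theorem lcaLevel_le_lcaLevel_parent_add_one (v w : V) :
    T.lcaLevel v w ≤ T.lcaLevel (T.parent v) w + 1 := by
  refine Finset.sup_le fun u hu => ?_
  simp only [Finset.mem_filter, Finset.mem_univ, true_and] at hu
  obtain ⟨huv, huw⟩ := hu
  by_cases h : u = v
  · subst h
    have := T.le_lcaLevel (T.isAncestor_refl _) ((T.isAncestor_parent u).trans huw)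
    have := T.level_le (v := u) (k := T.level (T.parent u) + 1)
      (by rw [Function.iterate_succ_apply, T.iterate_level])
    omega
  · have := T.le_lcaLevel (T.isAncestor_parent_of_ne huv h) huw
    omega

def potential (w v : V) : ℤ := T.level v - 2 * T.lcaLevel v w

theorem abs_potential_parent_sub_le (w : V) {v : V} (hv : T.parent v ≠ v) :
    |T.potential w (T.parent v) - T.potential w v| ≤ 1 := by
  have := T.level_parent hv
  have := T.lcaLevel_parent_le v w
  have := T.lcaLevel_le_lcaLevel_parent_add_one v w
  rw [potential, potential, abs_le]
  omega

theorem potential_sub_le_of_adj (w a b : V) (h : T.graph.Adj a b) :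
    T.potential w a - T.potential w b ≤ 1 := by
  obtain ⟨-, ⟨rfl, hne⟩ | ⟨rfl, hne⟩⟩ := (SimpleGraph.fromRel_adj ..).1 h
  · linarith [(abs_le.1 (T.abs_potential_parent_sub_le w (Ne.symm hne))).1]
  · linarith [(abs_le.1 (T.abs_potential_parent_sub_le w (Ne.symm hne))).2]

theorem reachable_parent (v : V) : T.graph.Reachable v (T.parent v) := by
  by_cases h : T.parent v = v
  · rw [h]
  · exact SimpleGraph.Adj.reachable <|
      (SimpleGraph.fromRel_adj ..).2 ⟨Ne.symm h, Or.inl ⟨rfl, Ne.symm h⟩⟩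

theorem reachable_root (v : V) : T.graph.Reachable v T.root := by
  suffices ∀ k, T.graph.Reachable v (T.parent^[k] v) from T.iterate_level v ▸ this _
  intro k
  induction k with
  | zero => rfl
  | succ k ih => exact ih.trans (Function.iterate_succ_apply' .. ▸ T.reachable_parent _)

theorem level_add_level_le_dist_add_two_mul_lcaLevel (v w : V) :
    T.level v + T.level w ≤ T.graph.dist v w + 2 * T.lcaLevel v w := by
  have := ((T.reachable_root v).trans (T.reachable_root w).symm).sub_le_dist
    (T.potential_sub_le_of_adj w)
  simp only [potential, lcaLevel_self] at this
  omega

theorem nonempty_leaf : Nonempty T.Leaf := by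
  obtain ⟨v, -, hv⟩ := Finset.exists_max_image Finset.univ T.level ⟨T.root, Finset.mem_univ _⟩
  refine ⟨⟨v, fun u hu => by_contra fun hne => ?_⟩⟩
  have hpu : T.parent u ≠ u := hu ▸ Ne.symm hne
  have := T.level_parent hpu
  rw [hu] at this
  have := hv u (Finset.mem_univ _)
  omega

theorem isHermitian_ancMatrix : T.ancMatrix.IsHermitian := by
  ext v w
  exact congrArg Nat.cast (T.lcaLevel_comm w.1 v.1)

theorem card_leaf_mul_sum_level_sub_le_sum_ancMatrix :
    (Fintype.card T.Leaf : ℝ) * ∑ v : T.Leaf, (T.level v.1 : ℝ) -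
        (∑ v : T.Leaf, ∑ w : T.Leaf, (T.graph.dist v.1 w.1 : ℝ)) / 2 ≤
      ∑ v, ∑ w, T.ancMatrix v w := by
  have hpair (v w : T.Leaf) :
      (T.level v.1 + T.level w.1 : ℝ) ≤ T.graph.dist v.1 w.1 + 2 * T.ancMatrix v w := by
    rw [ancMatrix, Matrix.of_apply]
    exact_mod_cast T.level_add_level_le_dist_add_two_mul_lcaLevel v.1 w.1
  have hsum : ∑ v : T.Leaf, ∑ w : T.Leaf, (T.level v.1 + T.level w.1 : ℝ) ≤
      ∑ v : T.Leaf, ∑ w : T.Leaf, (T.graph.dist v.1 w.1 + 2 * T.ancMatrix v w) :=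
    Finset.sum_le_sum fun v _ => Finset.sum_le_sum fun w _ => hpair v w
  simp only [Finset.sum_add_distrib, Finset.sum_const, Finset.card_univ, nsmul_eq_mul,
    ← Finset.mul_sum] at hsum
  linarith

end TreeOn

/-- `ρ_C(T) ≥ D_T(r) − TW(T)/L(T)`, where `D_T(r)` is the sum
of the distances from the root to all leaves and `TW(T)` is the terminal
Wiener index (the sum of distances over all unordered pairs of leaves, i.e.
half of the sum over ordered pairs). -/
theorem rhoC_ge_rootDistSum_sub_terminalWiener_div_numLeaves
    {V : Type} [Fintype V] [DecidableEq V] (T : TreeOn V) :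
    (∑ v : T.Leaf, (T.level v.1 : ℝ)) -
        ((∑ v : T.Leaf, ∑ w : T.Leaf, (T.graph.dist v.1 w.1 : ℝ)) / 2) /
          (Fintype.card T.Leaf : ℝ)
      ≤ T.rhoC := by
  have : Nonempty T.Leaf := T.nonempty_leaf
  have hn : (0 : ℝ) < Fintype.card T.Leaf := Nat.cast_pos.2 Fintype.card_pos
  calc _ = ((Fintype.card T.Leaf : ℝ) * ∑ v : T.Leaf, (T.level v.1 : ℝ) -
          (∑ v : T.Leaf, ∑ w : T.Leaf, (T.graph.dist v.1 w.1 : ℝ)) / 2) /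
          (Fintype.card T.Leaf : ℝ) := by
        field_simp
    _ ≤ (∑ v, ∑ w, T.ancMatrix v w) / (Fintype.card T.Leaf : ℝ) := by
        gcongr
        exact T.card_leaf_mul_sum_level_sub_le_sum_ancMatrix
    _ ≤ T.rhoC := by
        rw [div_le_iff₀ hn]
        exact T.isHermitian_ancMatrix.sum_apply_le_sSup_eigenvalues_mul_card
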